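/- arXiv:2408.12515 — 3 statements merged into one kernel-verified Lean document; each statement's English description precedes it below -/
import Mathlib

section
/- The measure ν_p defined by ν_p(0) = 1−p and ν_p(k) = (1−p)·B(1+1/p, k) for k ≥ 1, where B is the Beta function, satisfies ⟨ν_p, x∨1⟩ = ν_p(0) + Σ_{k≥1} k·ν_p(k) = 1, i.e. (1−p)·Σ_{k=1}^∞ k·B(1+1/p, k) = p. -/
/-!
The recurrence `(a + k) B(a, k + 1) = k B(a, k)` makes the partial sums telescope:
`(a - 2) ∑_{k < n} (k + 1) B(a, k + 1) = 1 - (n + a) (n + 1) B(a, n + 1)`.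
By Euler's limit formula for `Γ`, `B(a, n + 1) ~ Γ(a) n^(-a)`, so for `a > 2` the boundary term
vanishes and `∑_{k ≥ 1} k B(a, k) = 1 / (a - 2)`, which is `p / (1 - p)` at `a = 1 + 1/p`.
-/

open Real

/-- The Beta function `B(x,y) = Γ(x)Γ(y)/Γ(x+y)`. -/
noncomputable def betaFn (x y : ℝ) : ℝ := Real.Gamma x * Real.Gamma y / Real.Gamma (x + y)

/-- The measure `ν_p` on `ℕ`: `ν_p(0) = 1 - p`, `ν_p(k) = (1-p) B(1+1/p, k)` for `k ≥ 1`. -/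
noncomputable def nuP (p : ℝ) : ℕ → ℝ
  | 0 => 1 - p
  | (k + 1) => (1 - p) * betaFn (1 + 1 / p) (k + 1)

open Filter Finset Topology
open scoped Nat

lemma betaFn_pos {x y : ℝ} (hx : 0 < x) (hy : 0 < y) : 0 < betaFn x y := by
  unfold betaFn
  have := Gamma_pos_of_pos hx
  have := Gamma_pos_of_pos hy
  have := Gamma_pos_of_pos (add_pos hx hy)
  positivity

lemma betaFn_one_right {x : ℝ} (hx : 0 < x) : betaFn x 1 = 1 / x := by
  have := (Gamma_pos_of_pos hx).ne'
  rw [betaFn, Gamma_one, Gamma_add_one hx.ne']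
  field_simp

lemma add_mul_betaFn_add_one {x y : ℝ} (hy : y ≠ 0) (hxy : x + y ≠ 0) :
    (x + y) * betaFn x (y + 1) = y * betaFn x y := by
  rw [betaFn, betaFn, ← add_assoc, Gamma_add_one hy, Gamma_add_one hxy]
  -- `Real.Gamma` takes the junk value `0` at its poles.
  by_cases hG : Gamma (x + y) = 0
  · simp [hG]
  · field_simp

lemma betaFn_nat_add_one {a : ℝ} (ha : 0 < a) (n : ℕ) :
    betaFn a (n + 1) = n ! / ∏ j ∈ range (n + 1), (a + j) := by
  induction n with
  | zero => simp [betaFn_one_right ha]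
  | succ n ih =>
    have hrec := add_mul_betaFn_add_one (x := a) (y := n + 1) (by positivity) (by positivity)
    rw [prod_range_succ, Nat.factorial_succ, Nat.cast_mul, mul_comm (∏ j ∈ range (n + 1), _),
      mul_div_mul_comm, ← ih]
    push_cast
    field_simp
    linear_combination hrec

lemma betaFn_nat_add_one_mul_rpow {a : ℝ} (ha : 0 < a) (n : ℕ) :
    betaFn a (n + 1) * (n : ℝ) ^ a = GammaSeq a n := by
  rw [betaFn_nat_add_one ha, GammaSeq]
  ring

lemma tendsto_betaFn_nat_add_one_mul_rpow {a : ℝ} (ha : 0 < a) :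
    Tendsto (fun n : ℕ => betaFn a (n + 1) * (n : ℝ) ^ a) atTop (𝓝 (Gamma a)) := by
  simpa only [betaFn_nat_add_one_mul_rpow ha] using GammaSeq_tendsto_Gamma a

lemma tendsto_quadratic_div_rpow {a : ℝ} (ha : 2 < a) :
    Tendsto (fun n : ℕ => ((n : ℝ) + a) * (n + 1) / (n : ℝ) ^ a) atTop (𝓝 0) := by
  have hlin (c : ℝ) : Tendsto (fun n : ℕ => 1 + c / n) atTop (𝓝 1) := by
    simpa using tendsto_const_nhds.add (tendsto_const_div_atTop_nhds_zero_nat c)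
  have hpow : Tendsto (fun n : ℕ => (n : ℝ) ^ (-(a - 2))) atTop (𝓝 0) :=
    (tendsto_rpow_neg_atTop (by linarith)).comp tendsto_natCast_atTop_atTop
  have h := ((hlin a).mul (hlin 1)).mul hpow
  rw [mul_zero] at h
  refine h.congr' ?_
  filter_upwards [eventually_ge_atTop 1] with n hn
  have hn0 : (0 : ℝ) < n := by exact_mod_cast hn
  rw [rpow_neg hn0.le, rpow_sub hn0, rpow_two]
  field_simp

lemma sub_two_mul_sum_range_mul_betaFn {a : ℝ} (ha : 0 < a) (n : ℕ) :
    (a - 2) * ∑ k ∈ range n, ((k : ℝ) + 1) * betaFn a (k + 1) =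
      1 - (n + a) * ((n + 1) * betaFn a (n + 1)) := by
  induction n with
  | zero => simp [betaFn_one_right ha, ha.ne']
  | succ n ih =>
    have hrec := add_mul_betaFn_add_one (x := a) (y := n + 1) (by positivity) (by positivity)
    rw [sum_range_succ, mul_add, ih]
    push_cast
    linear_combination (n + 2) * hrec

lemma tendsto_mul_betaFn_nat_add_one {a : ℝ} (ha : 2 < a) :
    Tendsto (fun n : ℕ => ((n : ℝ) + a) * ((n + 1) * betaFn a (n + 1))) atTop (𝓝 0) := by
  have h := (tendsto_quadratic_div_rpow ha).mul
    (tendsto_betaFn_nat_add_one_mul_rpow (a := a) (by linarith))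
  rw [zero_mul] at h
  refine h.congr' ?_
  filter_upwards [eventually_ge_atTop 1] with n hn
  have : (n : ℝ) ^ a ≠ 0 := (rpow_pos_of_pos (by exact_mod_cast hn) a).ne'
  field_simp

lemma hasSum_nat_add_one_mul_betaFn {a : ℝ} (ha : 2 < a) :
    HasSum (fun k : ℕ => ((k : ℝ) + 1) * betaFn a (k + 1)) (1 / (a - 2)) := by
  have ha0 : 0 < a := by linarith
  have hnonneg (k : ℕ) : 0 ≤ ((k : ℝ) + 1) * betaFn a (k + 1) :=
    mul_nonneg (by positivity) (betaFn_pos ha0 (by positivity)).le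
  rw [hasSum_iff_tendsto_nat_of_nonneg hnonneg]
  have h := ((tendsto_mul_betaFn_nat_add_one ha).const_sub 1).div_const (a - 2)
  rw [sub_zero] at h
  refine h.congr fun n => ?_
  rw [← sub_two_mul_sum_range_mul_betaFn ha0, mul_div_cancel_left₀ _ (by linarith)]

/-- `⟨ν_p, x ∨ 1⟩ = ν_p(0) + Σ_{k ≥ 1} k ν_p(k) = 1`, equivalently
`(1-p) Σ_{k=1}^∞ k B(1+1/p, k) = p`. -/
theorem nuP_total_mass (p : ℝ) (hp : p ∈ Set.Ioo (0 : ℝ) 1) :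
    nuP p 0 + ∑' k : ℕ, ((k : ℝ) + 1) * nuP p (k + 1) = 1 ∧
    (1 - p) * ∑' k : ℕ, ((k : ℝ) + 1) * betaFn (1 + 1 / p) (k + 1) = p := by
  obtain ⟨hp0, hp1⟩ := hp
  have ha : 2 < 1 + 1 / p := by
    have : 1 < 1 / p := by rw [lt_div_iff₀ hp0]; linarith
    linarith
  have hsum : ∑' k : ℕ, ((k : ℝ) + 1) * betaFn (1 + 1 / p) (k + 1) = p / (1 - p) := by
    rw [(hasSum_nat_add_one_mul_betaFn ha).tsum_eq,
      show 1 + 1 / p - 2 = (1 - p) / p by field_simp; ring, one_div_div]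
  have hbeta : (1 - p) * ∑' k : ℕ, ((k : ℝ) + 1) * betaFn (1 + 1 / p) (k + 1) = p := by
    rw [hsum, mul_div_cancel₀ _ (by linarith)]
  refine ⟨?_, hbeta⟩
  have hnu (k : ℕ) : ((k : ℝ) + 1) * nuP p (k + 1) =
      (1 - p) * (((k : ℝ) + 1) * betaFn (1 + 1 / p) (k + 1)) := by
    rw [nuP]; ring
  rw [tsum_congr hnu, tsum_mul_left, hbeta, nuP]
  ring
end

section
/- Let C_k(j) denote the number of subtrees of size j obtained by removing the root of a uniform random recursive tree on k+1 vertices. Then the joint law of (C_k(1),…,C_k(k)) is given by P[C_k(1)=a_1,…,C_k(k)=a_k] = 1_{Σ_j j·a_j = k} · Π_{j=1}^k 1/(j^{a_j}·a_j!). -/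
/-- An encoding of a recursive tree on vertices `{0, 1, …, k}` (root `0`): for each
`i : Fin k`, vertex `i+1` attaches to a parent among `{0, …, i}`.  The uniform measure on
this type is the uniform random recursive tree on `k+1` vertices. -/
def RRTCode (k : ℕ) := ∀ i : Fin k, Fin (i.val + 1)

instance (k : ℕ) : Fintype (RRTCode k) := by unfold RRTCode; infer_instance
instance (k : ℕ) : DecidableEq (RRTCode k) := by unfold RRTCode; infer_instance

/-- The parent of vertex `v ∈ {1, …, k}` in the recursive tree coded by `σ`. -/
def rrtParent {k : ℕ} (σ : RRTCode k) (v : ℕ) : ℕ :=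
  if h : 1 ≤ v ∧ v ≤ k then (σ ⟨v - 1, by omega⟩ : ℕ) else 0

/-- Fuelled ancestor climbing: iterate the parent map until reaching a child of the root. -/
def rrtRepAux (f : ℕ → ℕ) : ℕ → ℕ → ℕ
  | 0, v => v
  | fuel + 1, v => if f v = 0 then v else rrtRepAux f fuel (f v)

/-- The child of the root which is an ancestor of `v` (or `v` itself if `v` is a child of
the root); i.e. the representative of the subtree containing `v` after removing the root. -/
def rrtRep {k : ℕ} (σ : RRTCode k) (v : ℕ) : ℕ := rrtRepAux (rrtParent σ) v v

/-- `C_k(j)(σ)`: the number of subtrees of size `j` obtained by removing the root of the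
recursive tree on `k+1` vertices coded by `σ`. -/
def rrtC (k : ℕ) (σ : RRTCode k) (j : ℕ) : ℕ :=
  ((Finset.Icc 1 k).filter fun c =>
    rrtParent σ c = 0 ∧ ((Finset.Icc 1 k).filter fun v => rrtRep σ v = c).card = j).card

/-!
Attaching vertex `k + 1` to the root adds a subtree of size `1`; attaching it to one of the `s`
vertices of a subtree of size `s` turns that subtree into one of size `s + 1`. Read backwards,
this gives a recursion for the number `N_k(m)` of codes whose multiset of subtree sizes is `m`.
With `z_m = ∏ j ^ m_j * m_j!` one shows `N_k(m) * z_m = k!` for every partition `m` of `k` by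
induction: in `N_{k+1}(m) * z_m` each part size `j` contributes `j * m_j * k!`, and these add up
to `(∑ j * m_j) * k! = (k + 1)!`. As there are `k!` codes, the probability is `1 / z_m`.
-/

open Finset Nat

namespace Multiset

variable {α : Type*} [DecidableEq α]

theorem cons_eq_iff_mem_and_eq_erase {a : α} {s t : Multiset α} :
    a ::ₘ s = t ↔ a ∈ t ∧ s = t.erase a := by
  constructor
  · rintro rfl
    exact ⟨mem_cons_self a s, (erase_cons_head a s).symm⟩
  · rintro ⟨ha, rfl⟩
    exact cons_erase ha

theorem cons_erase_eq_iff {a b : α} {s t : Multiset α} (ha : a ∈ s) :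
    b ::ₘ s.erase a = t ↔ b ∈ t ∧ s = a ::ₘ t.erase b := by
  rw [cons_eq_iff_mem_and_eq_erase, ← cons_inj_right a, cons_erase ha]

theorem map_eq_cons_erase_of_eqOn {β : Type*} [DecidableEq β] {s : Multiset α} {f g : α → β}
    {a : α} (hs : s.Nodup) (ha : a ∈ s) (hfg : ∀ x ∈ s, x ≠ a → f x = g x) :
    s.map f = f a ::ₘ (s.map g).erase (g a) := by
  rw [← cons_erase ha, map_cons, map_cons, erase_cons_head]
  refine congrArg _ (map_congr rfl fun x hx => hfg x (mem_of_mem_erase hx) ?_)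
  exact ((hs.mem_erase_iff).1 hx).1

theorem count_sum_replicate (S : Finset α) (a : α → ℕ) (i : α) :
    (∑ j ∈ S, replicate (a j) j).count i = if i ∈ S then a i else 0 := by
  simp only [count_sum', count_replicate, sum_ite_eq']

theorem mem_sum_replicate_iff {S : Finset α} {a : α → ℕ} {i : α} :
    i ∈ ∑ j ∈ S, replicate (a j) j ↔ i ∈ S ∧ a i ≠ 0 := by
  rw [← count_ne_zero, count_sum_replicate]
  split_ifs with h <;> simp [h]

theorem sum_sum_replicate (S : Finset ℕ) (a : ℕ → ℕ) :
    (∑ j ∈ S, replicate (a j) j).sum = ∑ j ∈ S, j * a j := by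
  simp [sum_sum, mul_comm]

/-- Reindexes the ways of growing a part `s` of `b` to `s + 1` (with weight `s`) so as to reach
`m`, by the grown part: then `b = s ::ₘ m.erase (s + 1)`, which has `m.count s + 1` parts `s`. -/
theorem sum_map_mul_ite_cons_succ_erase_eq {b m : Multiset ℕ} {S : Finset ℕ}
    (hS : b.toFinset ⊆ S) :
    (b.map fun s => s * if (s + 1) ::ₘ b.erase s = m then 1 else 0).sum =
      ∑ s ∈ S,
        if s + 1 ∈ m ∧ b = s ::ₘ m.erase (s + 1) then s * (m.count s + 1) else 0 := by
  rw [sum_multiset_map_count, sum_subset hS fun s _ hs => by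
    rw [count_eq_zero.2 (by simpa using hs), zero_smul]]
  refine sum_congr rfl fun s _ => ?_
  by_cases hs : s ∈ b
  · simp only [cons_erase_eq_iff hs, smul_eq_mul]
    split_ifs with h
    · conv_lhs => rw [h.2]
      rw [count_cons_self, count_erase_of_ne (by omega)]
      ring
    · simp
  · rw [count_eq_zero.2 hs, zero_smul, if_neg]
    rintro ⟨-, rfl⟩
    exact hs (mem_cons_self _ _)

end Multiset

theorem sum_Icc_one_succ {M : Type*} [AddCommMonoid M] (f : ℕ → M) (k : ℕ) :
    ∑ j ∈ Icc 1 (k + 1), f j = f 1 + ∑ s ∈ Icc 1 k, f (s + 1) := by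
  rw [← insert_Icc_add_one_left_eq_Icc (by omega), sum_insert (by simp), ← map_add_right_Icc,
    sum_map]
  rfl

/-- The order of the centraliser of a permutation of cycle type `m`. -/
def zFactor (m : Multiset ℕ) : ℕ := ∏ j ∈ m.toFinset, j ^ m.count j * (m.count j)!

theorem zFactor_eq_prod_of_subset {m : Multiset ℕ} {S : Finset ℕ} (h : m.toFinset ⊆ S) :
    zFactor m = ∏ j ∈ S, j ^ m.count j * (m.count j)! := by
  refine prod_subset h fun j _ hj => ?_
  simp [Multiset.count_eq_zero.2 (by simpa using hj)]

@[simp] theorem zFactor_zero : zFactor 0 = 1 := rfl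

theorem zFactor_cons (s : ℕ) (m : Multiset ℕ) :
    zFactor (s ::ₘ m) = s * (m.count s + 1) * zFactor m := by
  have hsub : m.toFinset ⊆ insert s m.toFinset := subset_insert _ _
  rw [zFactor_eq_prod_of_subset (m := s ::ₘ m) (S := insert s m.toFinset) (by simp),
    zFactor_eq_prod_of_subset hsub, ← mul_prod_erase _ _ (mem_insert_self s _),
    ← mul_prod_erase _ _ (mem_insert_self s _),
    prod_congr rfl fun j hj => by rw [Multiset.count_cons_of_ne (ne_of_mem_erase hj)],
    Multiset.count_cons_self, pow_succ, factorial_succ]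
  ring

theorem zFactor_of_mem {s : ℕ} {m : Multiset ℕ} (h : s ∈ m) :
    zFactor m = s * m.count s * zFactor (m.erase s) := by
  conv_lhs => rw [← Multiset.cons_erase h]
  rw [zFactor_cons, Multiset.count_erase_self,
    Nat.sub_add_cancel (Multiset.one_le_count_iff_mem.2 h)]

theorem zFactor_pos {m : Multiset ℕ} (h : 0 ∉ m) : 0 < zFactor m :=
  prod_pos fun j hj => by
    have : j ≠ 0 := fun hj0 => h (by simpa [hj0] using hj)
    positivity

theorem zFactor_sum_replicate (S : Finset ℕ) (a : ℕ → ℕ) :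
    zFactor (∑ j ∈ S, Multiset.replicate (a j) j) = ∏ j ∈ S, j ^ a j * (a j)! := by
  rw [zFactor_eq_prod_of_subset fun i hi =>
    (Multiset.mem_sum_replicate_iff.1 (Multiset.mem_toFinset.1 hi)).1]
  exact prod_congr rfl fun j hj => by rw [Multiset.count_sum_replicate, if_pos hj]

theorem rrtRepAux_succ_fuel {f : ℕ → ℕ} (hf : ∀ w, f w ≠ 0 → f w < w) :
    ∀ {n v : ℕ}, v ≤ n → rrtRepAux f (n + 1) v = rrtRepAux f n v
  | 0, v, hv => by
    obtain rfl : v = 0 := by omega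
    have : f 0 = 0 := by by_contra h; exact absurd (hf 0 h) (by omega)
    simp [rrtRepAux, this]
  | n + 1, v, hv => by
    show (if f v = 0 then v else rrtRepAux f (n + 1) (f v)) =
      if f v = 0 then v else rrtRepAux f n (f v)
    split_ifs with h
    · rfl
    · exact rrtRepAux_succ_fuel hf (by have := hf v h; omega)

theorem rrtRepAux_of_le_fuel {f : ℕ → ℕ} (hf : ∀ w, f w ≠ 0 → f w < w) {n v : ℕ}
    (hv : v ≤ n) : rrtRepAux f n v = rrtRepAux f v v := by
  induction n, hv using Nat.le_induction with
  | base => rfl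
  | succ n hvn ih => rw [rrtRepAux_succ_fuel hf hvn, ih]

namespace RRTCode

variable {k : ℕ}

theorem rrtParent_lt_of_ne_zero (σ : RRTCode k) {v : ℕ} (h : rrtParent σ v ≠ 0) :
    rrtParent σ v < v := by
  unfold rrtParent at h ⊢
  split_ifs at h ⊢ with hv
  · have : (σ ⟨v - 1, by omega⟩ : ℕ) < v - 1 + 1 := (σ _).isLt
    omega
  · exact absurd rfl h

theorem rrtRep_eq (σ : RRTCode k) (v : ℕ) :
    rrtRep σ v = if rrtParent σ v = 0 then v else rrtRep σ (rrtParent σ v) := by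
  have hf := fun w => rrtParent_lt_of_ne_zero σ (v := w)
  cases v with
  | zero => simp [rrtRep, rrtRepAux, rrtParent]
  | succ n =>
    rw [rrtRep, rrtRepAux]
    split_ifs with h
    · rfl
    · exact rrtRepAux_of_le_fuel hf (by have := hf _ h; omega)

theorem rrtRep_of_rrtParent_eq_zero (σ : RRTCode k) {v : ℕ} (h : rrtParent σ v = 0) :
    rrtRep σ v = v := by
  rw [rrtRep_eq, if_pos h]

theorem rrtRep_of_rrtParent_ne_zero (σ : RRTCode k) {v : ℕ} (h : rrtParent σ v ≠ 0) :
    rrtRep σ v = rrtRep σ (rrtParent σ v) := by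
  rw [rrtRep_eq, if_neg h]

theorem rrtParent_rrtRep (σ : RRTCode k) (v : ℕ) : rrtParent σ (rrtRep σ v) = 0 := by
  induction v using Nat.strong_induction_on with
  | _ v ih =>
    by_cases h : rrtParent σ v = 0
    · rwa [rrtRep_of_rrtParent_eq_zero σ h]
    · rw [rrtRep_of_rrtParent_ne_zero σ h]
      exact ih _ (rrtParent_lt_of_ne_zero σ h)

theorem rrtRep_mem_Icc (σ : RRTCode k) {v : ℕ} (hv : 1 ≤ v) : rrtRep σ v ∈ Icc 1 v := by
  induction v using Nat.strong_induction_on with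
  | _ v ih =>
    by_cases h : rrtParent σ v = 0
    · simp [rrtRep_of_rrtParent_eq_zero σ h, hv]
    · have hlt := rrtParent_lt_of_ne_zero σ h
      have := mem_Icc.1 (ih _ hlt (by omega))
      rw [rrtRep_of_rrtParent_ne_zero σ h, mem_Icc]
      omega

/-- Attach vertex `k + 1` to the vertex `t ∈ {0, …, k}`. -/
def snoc (τ : RRTCode k) (t : Fin (k + 1)) : RRTCode (k + 1) :=
  Fin.snoc (α := fun i : Fin (k + 1) => Fin (i.val + 1)) τ t

def snocEquiv : RRTCode k × Fin (k + 1) ≃ RRTCode (k + 1) :=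
  (Equiv.prodComm _ _).trans (Fin.snocEquiv fun i : Fin (k + 1) => Fin (i.val + 1))

theorem snocEquiv_apply (p : RRTCode k × Fin (k + 1)) : snocEquiv p = p.1.snoc p.2 := rfl

theorem card_eq_factorial (k : ℕ) : Fintype.card (RRTCode k) = k ! := by
  induction k with
  | zero => rfl
  | succ k ih =>
    rw [← Fintype.card_congr snocEquiv, Fintype.card_prod, ih, Fintype.card_fin,
      factorial_succ, mul_comm]

def rootChildren (σ : RRTCode k) : Finset ℕ := {c ∈ Icc 1 k | rrtParent σ c = 0}

def blockCard (σ : RRTCode k) (c : ℕ) : ℕ := #{v ∈ Icc 1 k | rrtRep σ v = c}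

def blockSizes (σ : RRTCode k) : Multiset ℕ := (rootChildren σ).val.map (blockCard σ)

theorem rrtC_eq_count_blockSizes (σ : RRTCode k) (j : ℕ) :
    rrtC k σ j = (blockSizes σ).count j := by
  rw [rrtC, blockSizes, Multiset.count_map, rootChildren, filter_val, Multiset.filter_filter,
    card_def, filter_val]
  congr 1
  refine Multiset.filter_congr fun c _ => ?_
  rw [blockCard, and_comm, eq_comm]

theorem rrtRep_mem_rootChildren (σ : RRTCode k) {v : ℕ} (hv : v ∈ Icc 1 k) :
    rrtRep σ v ∈ rootChildren σ := by
  have h := mem_Icc.1 (rrtRep_mem_Icc σ (mem_Icc.1 hv).1)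
  simp only [rootChildren, mem_filter, mem_Icc]
  exact ⟨⟨h.1, h.2.trans (mem_Icc.1 hv).2⟩, rrtParent_rrtRep σ v⟩

theorem blockSizes_subset_Icc (σ : RRTCode k) : (blockSizes σ).toFinset ⊆ Icc 1 k := by
  intro s hs
  obtain ⟨c, hc, rfl⟩ := Multiset.mem_map.1 (Multiset.mem_toFinset.1 hs)
  obtain ⟨hcI, hc0⟩ := mem_filter.1 (show c ∈ rootChildren σ from hc)
  have hcc : c ∈ {v ∈ Icc 1 k | rrtRep σ v = c} :=
    mem_filter.2 ⟨hcI, rrtRep_of_rrtParent_eq_zero σ hc0⟩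
  exact mem_Icc.2 ⟨card_pos.2 ⟨c, hcc⟩, (card_filter_le _ _).trans (by simp)⟩

theorem sum_blockCard_rrtRep {M : Type*} [AddCommMonoid M] (σ : RRTCode k) (h : ℕ → M) :
    ∑ v ∈ Icc 1 k, h (blockCard σ (rrtRep σ v)) =
      ((blockSizes σ).map fun s => s • h s).sum := by
  rw [← sum_fiberwise_of_maps_to' (fun v hv => rrtRep_mem_rootChildren σ hv)
    (fun c => h (blockCard σ c))]
  simp only [sum_const, blockSizes, Multiset.map_map]
  rfl

theorem blockSizes_eq_sum_replicate_iff (σ : RRTCode k) (a : ℕ → ℕ) :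
    blockSizes σ = ∑ j ∈ Icc 1 k, Multiset.replicate (a j) j ↔
      ∀ j ∈ Icc 1 k, rrtC k σ j = a j := by
  simp only [Multiset.ext, Multiset.count_sum_replicate, rrtC_eq_count_blockSizes]
  refine ⟨fun h j hj => by rw [h, if_pos hj], fun h j => ?_⟩
  split_ifs with hj
  · exact h j hj
  · exact Multiset.count_eq_zero.2 fun hmem =>
      hj (blockSizes_subset_Icc σ (Multiset.mem_toFinset.2 hmem))

section Snoc

variable (τ : RRTCode k) (t : Fin (k + 1))

theorem snoc_castSucc (i : Fin k) : τ.snoc t i.castSucc = τ i :=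
  Fin.snoc_castSucc (α := fun i : Fin (k + 1) => Fin (i.val + 1)) ..

theorem snoc_last : τ.snoc t (Fin.last k) = t :=
  Fin.snoc_last (α := fun i : Fin (k + 1) => Fin (i.val + 1)) ..

theorem rrtParent_snoc_of_le {v : ℕ} (hv : v ≤ k) :
    rrtParent (τ.snoc t) v = rrtParent τ v := by
  unfold rrtParent
  by_cases h : 1 ≤ v
  · rw [dif_pos ⟨h, by omega⟩, dif_pos ⟨h, hv⟩]
    exact congrArg Fin.val (snoc_castSucc τ t ⟨v - 1, by omega⟩)
  · rw [dif_neg (by omega), dif_neg (by omega)]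

theorem rrtParent_snoc_last : rrtParent (τ.snoc t) (k + 1) = t := by
  unfold rrtParent
  rw [dif_pos ⟨by omega, le_rfl⟩]
  exact congrArg Fin.val (snoc_last τ t)

theorem rrtRep_snoc_of_le {v : ℕ} (hv : v ≤ k) : rrtRep (τ.snoc t) v = rrtRep τ v := by
  induction v using Nat.strong_induction_on with
  | _ v ih =>
    rw [rrtRep_eq, rrtRep_eq τ, rrtParent_snoc_of_le τ t hv]
    split_ifs with h
    · rfl
    · exact ih _ (rrtParent_lt_of_ne_zero τ h) (by have := rrtParent_lt_of_ne_zero τ h; omega)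

theorem rrtRep_snoc_last :
    rrtRep (τ.snoc t) (k + 1) = if (t : ℕ) = 0 then k + 1 else rrtRep τ t := by
  rw [rrtRep_eq, rrtParent_snoc_last]
  split_ifs
  · rfl
  · exact rrtRep_snoc_of_le τ t (by omega)

theorem blockCard_eq_zero_of_lt {c : ℕ} (hc : k < c) : blockCard τ c = 0 := by
  refine card_eq_zero.2 (filter_eq_empty_iff.2 fun v hv hvc => ?_)
  have := mem_Icc.1 (rrtRep_mem_Icc τ (mem_Icc.1 hv).1)
  have := (mem_Icc.1 hv).2
  omega

theorem blockCard_snoc (c : ℕ) :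
    blockCard (τ.snoc t) c = blockCard τ c + if rrtRep (τ.snoc t) (k + 1) = c then 1 else 0 := by
  have hfilter : {v ∈ Icc 1 k | rrtRep (τ.snoc t) v = c} = {v ∈ Icc 1 k | rrtRep τ v = c} :=
    filter_congr fun v hv => by rw [rrtRep_snoc_of_le τ t (mem_Icc.1 hv).2]
  rw [blockCard, ← insert_Icc_right_eq_Icc_add_one (by omega : 1 ≤ k + 1), filter_insert]
  split_ifs
  · rw [card_insert_of_notMem (by simp), hfilter]; rfl
  · rw [hfilter]; rfl

theorem rootChildren_snoc :
    rootChildren (τ.snoc t) =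
      if (t : ℕ) = 0 then insert (k + 1) (rootChildren τ) else rootChildren τ := by
  rw [rootChildren, ← insert_Icc_right_eq_Icc_add_one (by omega : 1 ≤ k + 1), filter_insert,
    rrtParent_snoc_last, rootChildren,
    filter_congr fun c hc => by rw [rrtParent_snoc_of_le τ t (mem_Icc.1 hc).2]]

theorem blockSizes_snoc_zero : blockSizes (τ.snoc 0) = 1 ::ₘ blockSizes τ := by
  have hnot : k + 1 ∉ rootChildren τ := fun h => by simpa using (mem_filter.1 h).1
  have hrep : rrtRep (τ.snoc 0) (k + 1) = k + 1 := by rw [rrtRep_snoc_last]; rfl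
  rw [blockSizes, rootChildren_snoc, if_pos (by simp), insert_val_of_notMem hnot, Multiset.map_cons,
    blockCard_snoc, hrep, if_pos rfl, blockCard_eq_zero_of_lt τ (by omega), blockSizes]
  refine congrArg _ (Multiset.map_congr rfl fun c hc => ?_)
  have : c ≤ k := (mem_Icc.1 (mem_filter.1 (show c ∈ rootChildren τ from hc)).1).2
  rw [blockCard_snoc, hrep, if_neg (by omega), add_zero]

theorem blockSizes_snoc_succ (i : Fin k) :
    blockSizes (τ.snoc i.succ) =
      (blockCard τ (rrtRep τ (i + 1)) + 1) ::ₘ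
        (blockSizes τ).erase (blockCard τ (rrtRep τ (i + 1))) := by
  have hrep : rrtRep (τ.snoc i.succ) (k + 1) = rrtRep τ (i + 1) := by
    rw [rrtRep_snoc_last, if_neg (by simp), Fin.val_succ]
  have hmem := rrtRep_mem_rootChildren τ (v := i + 1) (mem_Icc.2 ⟨by omega, i.isLt⟩)
  rw [blockSizes, rootChildren_snoc, if_neg (by simp),
    Multiset.map_eq_cons_erase_of_eqOn (nodup _) hmem (g := blockCard τ), blockCard_snoc, hrep,
    if_pos rfl, blockSizes]
  intro c _ hc
  rw [blockCard_snoc, hrep, if_neg (Ne.symm hc), add_zero]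

theorem sum_snoc_blockSizes {M : Type*} [AddCommMonoid M] (g : Multiset ℕ → M) :
    ∑ t, g (blockSizes (τ.snoc t)) =
      g (1 ::ₘ blockSizes τ) +
        ((blockSizes τ).map fun s => s • g ((s + 1) ::ₘ (blockSizes τ).erase s)).sum := by
  set h := fun v => g ((blockCard τ (rrtRep τ v) + 1) ::ₘ
    (blockSizes τ).erase (blockCard τ (rrtRep τ v)))
  rw [Fin.sum_univ_succ, blockSizes_snoc_zero, ← sum_blockCard_rrtRep]
  simp only [blockSizes_snoc_succ]
  rw [Fin.sum_univ_eq_sum_range (fun i => h (i + 1)), range_eq_Ico, sum_Ico_add' h,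
    Ico_add_one_right_eq_Icc, zero_add]

end Snoc

def rrtCount (k : ℕ) (m : Multiset ℕ) : ℕ := #{τ : RRTCode k | blockSizes τ = m}

theorem sum_ite_and_blockSizes_eq (P : Prop) [Decidable P] (m : Multiset ℕ) (c : ℕ) :
    ∑ τ : RRTCode k, (if P ∧ blockSizes τ = m then c else 0) =
      if P then c * rrtCount k m else 0 := by
  by_cases hP : P <;> simp [hP, rrtCount, sum_ite, mul_comm]

theorem rrtCount_succ (k : ℕ) (m : Multiset ℕ) :
    rrtCount (k + 1) m =
      (if 1 ∈ m then rrtCount k (m.erase 1) else 0) +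
        ∑ s ∈ Icc 1 k,
          if s + 1 ∈ m then s * (m.count s + 1) * rrtCount k (s ::ₘ m.erase (s + 1))
          else 0 := by
  rw [rrtCount, card_filter, ← Equiv.sum_comp snocEquiv, Fintype.sum_prod_type,
    sum_congr rfl fun τ _ => sum_congr rfl fun t _ => by rw [snocEquiv_apply],
    sum_congr rfl fun τ _ => sum_snoc_blockSizes τ fun b => if b = m then 1 else 0]
  have hgrow (τ : RRTCode k) := Multiset.sum_map_mul_ite_cons_succ_erase_eq (m := m)
    (blockSizes_subset_Icc τ)
  simp only [smul_eq_mul, hgrow]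
  simp only [Multiset.cons_eq_iff_mem_and_eq_erase, sum_add_distrib]
  rw [sum_comm, sum_ite_and_blockSizes_eq, one_mul]
  simp only [sum_ite_and_blockSizes_eq]

theorem rrtCount_zero (m : Multiset ℕ) : rrtCount 0 m = if m = 0 then 1 else 0 := by
  have hB (τ : RRTCode 0) : blockSizes τ = 0 := by simp [blockSizes, rootChildren]
  simp only [rrtCount, hB, eq_comm (a := (0 : Multiset ℕ))]
  split_ifs with h
  · rw [filter_true_of_mem fun _ _ => h, Finset.card_univ, card_eq_factorial, factorial_zero]
  · rw [filter_false_of_mem fun _ _ => h, card_empty]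

theorem rrtCount_erase_one_mul_zFactor {k : ℕ} {m : Multiset ℕ} (hm : 0 ∉ m)
    (ih : ∀ {b : Multiset ℕ}, 0 ∉ b →
      rrtCount k b * zFactor b = if b.sum = k then k ! else 0) :
    (if 1 ∈ m then rrtCount k (m.erase 1) else 0) * zFactor m =
      m.count 1 * 1 * if m.sum = k + 1 then k ! else 0 := by
  by_cases h1 : 1 ∈ m
  · rw [if_pos h1]
    have := Multiset.sum_erase h1
    calc _ = m.count 1 * 1 * (rrtCount k (m.erase 1) * zFactor (m.erase 1)) := by
          rw [zFactor_of_mem h1]; ring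
      _ = _ := by
          rw [ih fun h => hm (Multiset.mem_of_mem_erase h)]
          congr 2
          exact propext (by omega)
  · rw [if_neg h1, Multiset.count_eq_zero.2 h1, zero_mul, zero_mul, zero_mul]

theorem rrtCount_cons_erase_succ_mul_zFactor {k s : ℕ} {m : Multiset ℕ} (hm : 0 ∉ m)
    (hs : 1 ≤ s)
    (ih : ∀ {b : Multiset ℕ}, 0 ∉ b →
      rrtCount k b * zFactor b = if b.sum = k then k ! else 0) :
    (if s + 1 ∈ m then s * (m.count s + 1) * rrtCount k (s ::ₘ m.erase (s + 1)) else 0) *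
      zFactor m = m.count (s + 1) * (s + 1) * if m.sum = k + 1 then k ! else 0 := by
  by_cases h : s + 1 ∈ m
  · rw [if_pos h]
    have hs0 : 0 ∉ s ::ₘ m.erase (s + 1) := by
      simp only [Multiset.mem_cons, not_or]
      exact ⟨by omega, fun h' => hm (Multiset.mem_of_mem_erase h')⟩
    have hz := zFactor_cons s (m.erase (s + 1))
    rw [Multiset.count_erase_of_ne (by omega)] at hz
    have := Multiset.sum_erase h
    calc _ = m.count (s + 1) * (s + 1) *
          (rrtCount k (s ::ₘ m.erase (s + 1)) * zFactor (s ::ₘ m.erase (s + 1))) := by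
          rw [zFactor_of_mem h, hz]; ring
      _ = _ := by
          rw [ih hs0, Multiset.sum_cons]
          congr 2
          exact propext (by omega)
  · rw [if_neg h, Multiset.count_eq_zero.2 h, zero_mul, zero_mul, zero_mul]

theorem rrtCount_mul_zFactor (k : ℕ) {m : Multiset ℕ} (hm : 0 ∉ m) :
    rrtCount k m * zFactor m = if m.sum = k then k ! else 0 := by
  induction k generalizing m with
  | zero =>
    rw [rrtCount_zero]
    by_cases h : m = 0
    · simp [h]
    · have : m.sum ≠ 0 := fun h0 => h (Multiset.eq_zero_of_forall_notMem fun x hx =>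
        hm (by rwa [← Multiset.sum_eq_zero_iff.1 h0 x hx]))
      simp [h, this]
  | succ k ih =>
    rw [rrtCount_succ, add_mul, sum_mul, rrtCount_erase_one_mul_zFactor hm ih,
      sum_congr rfl fun s hs => rrtCount_cons_erase_succ_mul_zFactor hm (mem_Icc.1 hs).1 ih,
      ← sum_mul, ← add_mul, ← sum_Icc_one_succ fun j => m.count j * j]
    by_cases h : m.sum = k + 1
    · have hsub : m.toFinset ⊆ Icc 1 (k + 1) := fun x hx => by
        have hx := Multiset.mem_toFinset.1 hx
        exact mem_Icc.2
          ⟨Nat.pos_of_ne_zero fun h0 => hm (h0 ▸ hx), h ▸ Multiset.le_sum_of_mem hx⟩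
      have hcount : ∑ j ∈ Icc 1 (k + 1), m.count j * j = m.sum := by
        simpa using (sum_multiset_count_of_subset m _ hsub).symm
      rw [hcount, if_pos h, if_pos h, h, factorial_succ]
    · rw [if_neg h, if_neg h, mul_zero]

theorem rrtCount_div_factorial (k : ℕ) {m : Multiset ℕ} (hm : 0 ∉ m) :
    (rrtCount k m : ℝ) / k ! = if m.sum = k then 1 / (zFactor m : ℝ) else 0 := by
  have key := rrtCount_mul_zFactor k hm
  have hz : (zFactor m : ℝ) ≠ 0 := by exact_mod_cast (zFactor_pos hm).ne'
  have hk : (k ! : ℝ) ≠ 0 := by exact_mod_cast (factorial_pos k).ne'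
  split_ifs at key ⊢
  · rw [div_eq_div_iff hk hz, one_mul]
    exact_mod_cast key
  · rw [(Nat.mul_eq_zero.1 key).resolve_right (zFactor_pos hm).ne', Nat.cast_zero, zero_div]

end RRTCode

open Classical in
theorem rrt_root_removal_ewens_general (k : ℕ) (a : ℕ → ℕ) :
    ((Finset.univ.filter fun σ : RRTCode k =>
        ∀ j ∈ Finset.Icc 1 k, rrtC k σ j = a j).card : ℝ) / (Fintype.card (RRTCode k)) =
      if ∑ j ∈ Finset.Icc 1 k, j * a j = k then
        ∏ j ∈ Finset.Icc 1 k, 1 / ((j : ℝ) ^ (a j) * (Nat.factorial (a j)))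
      else 0 := by
  have hm0 : 0 ∉ ∑ j ∈ Icc 1 k, Multiset.replicate (a j) j := fun h => by
    simpa using (Multiset.mem_sum_replicate_iff.1 h).1
  rw [RRTCode.card_eq_factorial, ← Multiset.sum_sum_replicate]
  convert RRTCode.rrtCount_div_factorial k hm0 using 3
  · rw [RRTCode.rrtCount]
    congr 1
    ext σ
    simp only [mem_filter, mem_univ, true_and]
    exact (RRTCode.blockSizes_eq_sum_replicate_iff σ a).symm
  · rw [zFactor_sum_replicate, prod_div_distrib, prod_const_one]
    push_cast
    rfl

open Classical in
/-- **Ewens sampling formula for random recursive trees**: the joint law of the subtree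
size counts `(C_k(1), …, C_k(k))` after removing the root of a uniform random recursive
tree on `k+1` vertices is
`P[C_k(j) = a_j, 1 ≤ j ≤ k] = 1_{Σ j a_j = k} ∏_{j=1}^k 1/(j^{a_j} a_j!)`. -/
theorem rrt_root_removal_ewens (k : ℕ) (hk : 1 ≤ k) (a : ℕ → ℕ) :
    ((Finset.univ.filter fun σ : RRTCode k =>
        ∀ j ∈ Finset.Icc 1 k, rrtC k σ j = a j).card : ℝ) / (Fintype.card (RRTCode k)) =
      if ∑ j ∈ Finset.Icc 1 k, j * a j = k then
        ∏ j ∈ Finset.Icc 1 k, 1 / ((j : ℝ) ^ (a j) * (Nat.factorial (a j)))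
      else 0 :=
  rrt_root_removal_ewens_general k a
end

section
/- For two nonnegative sequences x, y ∈ ℓ^p (1 ≤ p ≤ ∞), the decreasing rearrangements satisfy ‖x^↓ − y^↓‖_{ℓ^p} ≤ ‖x − y‖_{ℓ^p}; i.e. decreasing rearrangement is nonexpansive in ℓ^p. -/
open MeasureTheory ENNReal

/-- The decreasing rearrangement of a nonnegative sequence `x : ℕ → ℝ`:
`x^↓(n) = inf {t ≥ 0 : #{i : x i > t} ≤ n}`. -/
noncomputable def decRearrange (x : ℕ → ℝ) (n : ℕ) : ℝ :=
  sInf {t : ℝ | 0 ≤ t ∧ {i : ℕ | t < x i}.Finite ∧ {i : ℕ | t < x i}.ncard ≤ n}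

/-!
Rearrangement is 1-Lipschitz for the sup-distance: if `x ≤ y + c` pointwise then
`x^↓ ≤ y^↓ + c`, which is the case `p = ∞`. For `p < ∞` one proves, for every convex `Φ` and
finitely supported `x, y`, that `∑ Φ (x^↓ n - y^↓ n) ≤ ∑ Φ (x i - y i)`, by induction on the
support: exchanging two values of `y` so that the maxima of `x` and `y` sit at the same index
does not increase the right side (convexity of `Φ`), and removing that common maximum shifts both
rearrangements by one. Truncations of `x` and `y` converge in sup-norm, so their rearrangements
converge pointwise and the inequality passes to the limit with `Φ = |·| ^ p`.
-/

open Set Filter Topology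

theorem decRearrange_eq_sInf_encard (x : ℕ → ℝ) (n : ℕ) :
    decRearrange x n = sInf {t : ℝ | 0 ≤ t ∧ {i | t < x i}.encard ≤ n} := by
  simp only [encard_le_coe_iff_finite_ncard_le]
  rfl

theorem decRearrange_comp_equiv (x : ℕ → ℝ) (σ : ℕ ≃ ℕ) :
    decRearrange (x ∘ σ) = decRearrange x := by
  ext n
  simp only [decRearrange_eq_sInf_encard]
  congr! 5 with t
  exact encard_preimage_of_bijective σ.bijective {i | t < x i}

theorem decRearrange_zero_of_forall_le {x : ℕ → ℝ} {i₀ : ℕ} (hmax : ∀ i, x i ≤ x i₀)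
    (h₀ : 0 ≤ x i₀) : decRearrange x 0 = x i₀ := by
  have hset : {t : ℝ | 0 ≤ t ∧ {i | t < x i}.encard ≤ (0 : ℕ)} = Ici (x i₀) := by
    ext t
    simp only [Nat.cast_zero, nonpos_iff_eq_zero, encard_eq_zero, eq_empty_iff_forall_notMem,
      mem_ofPred_eq, not_lt, mem_Ici]
    exact ⟨fun h => h.2 i₀, fun h => ⟨h₀.trans h, fun i => (hmax i).trans h⟩⟩
  rw [decRearrange_eq_sInf_encard, hset, csInf_Ici]

theorem decRearrange_succ_of_forall_le {x : ℕ → ℝ} {i₀ : ℕ} (hmax : ∀ i, x i ≤ x i₀) (n : ℕ) :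
    decRearrange x (n + 1) = decRearrange (Function.update x i₀ 0) n := by
  simp only [decRearrange_eq_sInf_encard]
  congr 1
  ext t
  refine and_congr_right fun ht => ?_
  have hdiff : {i | t < Function.update x i₀ 0 i} = {i | t < x i} \ {i₀} := by
    ext i
    rcases eq_or_ne i i₀ with rfl | hi
    · simpa using ht
    · simp [hi]
  rw [hdiff]
  by_cases hi₀ : t < x i₀
  · rw [← encard_sdiff_singleton_add_one (show i₀ ∈ {i | t < x i} from hi₀), Nat.cast_add,
      Nat.cast_one]
    exact WithTop.add_le_add_iff_right ENat.one_ne_top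
  · have hempty : {i | t < x i} = ∅ :=
      eq_empty_of_forall_notMem fun i hi => hi₀ (hi.trans_le (hmax i))
    simp [hempty]

theorem decRearrange_le_add {x y : ℕ → ℝ} {c : ℝ} (hy : BddAbove (range y)) (hc : 0 ≤ c)
    (h : ∀ i, x i ≤ y i + c) (n : ℕ) : decRearrange x n ≤ decRearrange y n + c := by
  obtain ⟨B, hB⟩ := hy
  simp only [decRearrange_eq_sInf_encard]
  have hne : {t : ℝ | 0 ≤ t ∧ {i | t < y i}.encard ≤ n}.Nonempty := by
    refine ⟨max B 0, le_max_right _ _, ?_⟩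
    have hempty : {i | max B 0 < y i} = ∅ :=
      eq_empty_of_forall_notMem fun i hi =>
        ((le_max_left B 0).trans_lt hi).not_ge (hB (mem_range_self i))
    rw [hempty, encard_empty]
    exact zero_le
  rw [← sub_le_iff_le_add]
  refine le_csInf hne fun t ⟨ht, htn⟩ => sub_le_iff_le_add.2 (csInf_le ⟨0, fun _ h => h.1⟩ ?_)
  refine ⟨by linarith, le_trans (encard_le_encard fun i hi => ?_) htn⟩
  change t + c < x i at hi
  change t < y i
  linarith [h i]

theorem abs_decRearrange_sub_le {x y : ℕ → ℝ} {c : ℝ} (hx : BddAbove (range x))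
    (h : ∀ i, |x i - y i| ≤ c) (n : ℕ) : |decRearrange x n - decRearrange y n| ≤ c := by
  have hc : 0 ≤ c := (abs_nonneg _).trans (h 0)
  have hy : BddAbove (range y) := by
    obtain ⟨B, hB⟩ := hx
    refine ⟨B + c, forall_mem_range.2 fun i => ?_⟩
    linarith [hB (mem_range_self i), (abs_le.1 (h i)).1]
  have hxy := decRearrange_le_add (x := x) hy hc (fun i => by linarith [(abs_le.1 (h i)).2]) n
  have hyx := decRearrange_le_add (x := y) hx hc (fun i => by linarith [(abs_le.1 (h i)).1]) n
  exact abs_sub_le_iff.2 ⟨by linarith, by linarith⟩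

theorem ConvexOn.map_add_sub_map_le_of_le {Φ : ℝ → ℝ} (hΦ : ConvexOn ℝ univ Φ) {u w h : ℝ}
    (huw : u ≤ w) (hh : 0 ≤ h) : Φ (u + h) - Φ u ≤ Φ (w + h) - Φ w := by
  rcases (add_nonneg (sub_nonneg.2 huw) hh).eq_or_lt with hD | hD
  · obtain rfl : u = w := by linarith
    obtain rfl : h = 0 := by linarith
    rfl
  -- `u + h` and `w` are the convex combinations of `u` and `w + h` with swapped weights
  set a := (w - u) / (w - u + h)
  have ha : 0 ≤ a := div_nonneg (sub_nonneg.2 huw) hD.le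
  have hb : 0 ≤ 1 - a := by rw [sub_nonneg, div_le_one hD]; linarith
  have haD : a * (w - u + h) = w - u := div_mul_cancel₀ _ hD.ne'
  have hw : a • u + (1 - a) • (w + h) = u + h := by
    simp only [smul_eq_mul]; linear_combination -haD
  have hw' : (1 - a) • u + a • (w + h) = w := by
    simp only [smul_eq_mul]; linear_combination haD
  have h₁ := hΦ.2 (mem_univ u) (mem_univ (w + h)) ha hb (by ring)
  have h₂ := hΦ.2 (mem_univ u) (mem_univ (w + h)) hb ha (by ring)
  rw [hw] at h₁
  rw [hw'] at h₂
  simp only [smul_eq_mul] at h₁ h₂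
  linarith

theorem sum_map_sub_comp_swap_le {Φ : ℝ → ℝ} (hΦ : ConvexOn ℝ univ Φ) {x y : ℕ → ℝ}
    {s : Finset ℕ} {i j : ℕ} (hi : i ∈ s) (hj : j ∈ s) (hx : x j ≤ x i) (hy : y i ≤ y j) :
    ∑ k ∈ s, Φ (x k - y (Equiv.swap i j k)) ≤ ∑ k ∈ s, Φ (x k - y k) := by
  rcases eq_or_ne i j with rfl | hij
  · simp
  have hsub : {i, j} ⊆ s := Finset.insert_subset hi (Finset.singleton_subset_iff.2 hj)
  rw [← Finset.sum_sdiff hsub, ← Finset.sum_sdiff (f := fun k => Φ (x k - y k)) hsub,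
    Finset.sum_pair hij, Finset.sum_pair hij, Equiv.swap_apply_left, Equiv.swap_apply_right]
  have hrest : ∑ k ∈ s \ {i, j}, Φ (x k - y (Equiv.swap i j k)) =
      ∑ k ∈ s \ {i, j}, Φ (x k - y k) := by
    refine Finset.sum_congr rfl fun k hk => ?_
    simp only [Finset.mem_sdiff, Finset.mem_insert, Finset.mem_singleton, not_or] at hk
    rw [Equiv.swap_apply_of_ne_of_ne hk.2.1 hk.2.2]
  have hinc := hΦ.map_add_sub_map_le_of_le (u := x j - y j) (w := x i - y j) (by linarith)
    (sub_nonneg.2 hy)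
  rw [sub_add_sub_cancel, sub_add_sub_cancel] at hinc
  rw [hrest]
  linarith

theorem sum_range_succ_decRearrange {Φ : ℝ → ℝ} {x y : ℕ → ℝ} {i₀ : ℕ}
    (hx : ∀ i, x i ≤ x i₀) (hy : ∀ i, y i ≤ y i₀) (hx₀ : 0 ≤ x i₀) (hy₀ : 0 ≤ y i₀) (k : ℕ) :
    ∑ n ∈ Finset.range (k + 1), Φ (decRearrange x n - decRearrange y n) =
      Φ (x i₀ - y i₀) + ∑ n ∈ Finset.range k,
        Φ (decRearrange (Function.update x i₀ 0) n - decRearrange (Function.update y i₀ 0) n) := by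
  rw [Finset.sum_range_succ', add_comm, decRearrange_zero_of_forall_le hx hx₀,
    decRearrange_zero_of_forall_le hy hy₀]
  simp only [decRearrange_succ_of_forall_le hx, decRearrange_succ_of_forall_le hy]

theorem le_of_forall_mem_le_of_eq_zero {z : ℕ → ℝ} {s : Finset ℕ} (hz0 : ∀ i, 0 ≤ z i)
    (hzs : ∀ i ∉ s, z i = 0) {i₀ : ℕ} (hi₀ : ∀ i ∈ s, z i ≤ z i₀) (i : ℕ) : z i ≤ z i₀ := by
  by_cases hi : i ∈ s
  · exact hi₀ i hi
  · exact (hzs i hi).trans_le (hz0 i₀)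

theorem sum_range_card_decRearrange_le {Φ : ℝ → ℝ} (hΦ : ConvexOn ℝ univ Φ) (s : Finset ℕ)
    {x y : ℕ → ℝ} (hx0 : ∀ i, 0 ≤ x i) (hy0 : ∀ i, 0 ≤ y i) (hxs : ∀ i ∉ s, x i = 0)
    (hys : ∀ i ∉ s, y i = 0) :
    ∑ n ∈ Finset.range s.card, Φ (decRearrange x n - decRearrange y n) ≤
      ∑ i ∈ s, Φ (x i - y i) := by
  induction s using Finset.strongInduction generalizing x y with
  | H s ih =>
  rcases s.eq_empty_or_nonempty with rfl | hs
  · simp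
  obtain ⟨i, hi, hxi⟩ := s.exists_max_image x hs
  obtain ⟨j, hj, hyj⟩ := s.exists_max_image y hs
  set y' := y ∘ Equiv.swap i j
  have hy's : ∀ k ∉ s, y' k = 0 := fun k hk => by
    change y (Equiv.swap i j k) = 0
    rw [Equiv.swap_apply_of_ne_of_ne (ne_of_mem_of_not_mem hi hk).symm
      (ne_of_mem_of_not_mem hj hk).symm, hys k hk]
  have hy'max : ∀ k, y' k ≤ y' i := fun k => by
    simpa [y'] using le_of_forall_mem_le_of_eq_zero hy0 hys hyj (Equiv.swap i j k)
  have hIH := ih (s.erase i) (Finset.erase_ssubset hi)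
    (x := Function.update x i 0) (y := Function.update y' i 0)
    (fun k => by rcases eq_or_ne k i with rfl | hk <;> simp [*])
    (fun k => by rcases eq_or_ne k i with rfl | hk <;> simp [y', *])
    (fun k hk => by rcases eq_or_ne k i with rfl | hk' <;> simp_all)
    (fun k hk => by rcases eq_or_ne k i with rfl | hk' <;> simp_all)
  calc ∑ n ∈ Finset.range s.card, Φ (decRearrange x n - decRearrange y n)
      = Φ (x i - y' i) + ∑ n ∈ Finset.range (s.erase i).card, Φ (decRearrange
          (Function.update x i 0) n - decRearrange (Function.update y' i 0) n) := by
        rw [← Finset.card_erase_add_one hi, ← decRearrange_comp_equiv y (Equiv.swap i j)]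
        exact sum_range_succ_decRearrange (le_of_forall_mem_le_of_eq_zero hx0 hxs hxi) hy'max
          (hx0 i) (hy0 _) _
    _ ≤ Φ (x i - y' i) + ∑ k ∈ s.erase i,
          Φ (Function.update x i 0 k - Function.update y' i 0 k) := by gcongr
    _ = ∑ k ∈ s, Φ (x k - y' k) := by
        rw [← Finset.add_sum_erase s (fun k => Φ (x k - y' k)) hi]
        refine congrArg _ (Finset.sum_congr rfl fun k hk => ?_)
        simp [Finset.ne_of_mem_erase hk]
    _ ≤ ∑ k ∈ s, Φ (x k - y k) :=
        sum_map_sub_comp_swap_le hΦ hi hj (hxi j hj) (hyj i hi)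

theorem tendsto_decRearrange_truncate {x : ℕ → ℝ} (hx : Tendsto x atTop (𝓝 0)) (n : ℕ) :
    Tendsto (fun K => decRearrange (fun i => if i < K then x i else 0) n) atTop
      (𝓝 (decRearrange x n)) := by
  rw [Metric.tendsto_atTop]
  intro ε hε
  obtain ⟨K₀, hK₀⟩ := Metric.tendsto_atTop.1 hx (ε / 2) (half_pos hε)
  refine ⟨K₀, fun K hK => ?_⟩
  rw [Real.dist_eq, abs_sub_comm]
  refine (abs_decRearrange_sub_le hx.bddAbove_range (fun i => ?_) n).trans_lt (half_lt_self hε)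
  split_ifs with hi
  · simpa using (half_pos hε).le
  · simpa [Real.dist_eq] using (hK₀ i (hK.trans (not_lt.1 hi))).le

theorem sum_range_decRearrange_le_tsum {Φ : ℝ → ℝ} (hΦ : ConvexOn ℝ univ Φ)
    (hΦc : Continuous Φ) (hΦ0 : ∀ t, 0 ≤ Φ t) {x y : ℕ → ℝ} (hx0 : ∀ i, 0 ≤ x i)
    (hy0 : ∀ i, 0 ≤ y i) (hx : Tendsto x atTop (𝓝 0)) (hy : Tendsto y atTop (𝓝 0))
    (hsum : Summable fun i => Φ (x i - y i)) (N : ℕ) :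
    ∑ n ∈ Finset.range N, Φ (decRearrange x n - decRearrange y n) ≤ ∑' i, Φ (x i - y i) := by
  have hlim := tendsto_finsetSum (Finset.range N) fun n _ =>
    (hΦc.tendsto _).comp ((tendsto_decRearrange_truncate hx n).sub
      (tendsto_decRearrange_truncate hy n))
  refine le_of_tendsto hlim (eventually_atTop.2 ⟨N, fun K hK => ?_⟩)
  have hfin := sum_range_card_decRearrange_le hΦ (Finset.range K)
    (x := fun i => if i < K then x i else 0) (y := fun i => if i < K then y i else 0)
    (fun i => by split_ifs <;> simp [hx0]) (fun i => by split_ifs <;> simp [hy0])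
    (fun i hi => if_neg (mt Finset.mem_range.2 hi))
    (fun i hi => if_neg (mt Finset.mem_range.2 hi))
  calc _ ≤ ∑ n ∈ Finset.range K, Φ (decRearrange (fun i => if i < K then x i else 0) n -
          decRearrange (fun i => if i < K then y i else 0) n) :=
        Finset.sum_le_sum_of_subset_of_nonneg (Finset.range_subset_range.2 hK)
          fun _ _ _ => hΦ0 _
    _ ≤ ∑ i ∈ Finset.range K, Φ (x i - y i) := by
        rw [Finset.card_range] at hfin
        refine hfin.trans_eq (Finset.sum_congr rfl fun i hi => ?_)
        rw [if_pos (Finset.mem_range.1 hi), if_pos (Finset.mem_range.1 hi)]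
    _ ≤ ∑' i, Φ (x i - y i) := hsum.sum_le_tsum _ fun i _ => hΦ0 _

theorem eLpNorm_top_decRearrange_sub_le {x y : ℕ → ℝ} (hx : BddAbove (range x)) :
    eLpNorm (fun i => decRearrange x i - decRearrange y i) ∞ (Measure.count : Measure ℕ) ≤
      eLpNorm (fun i => x i - y i) ∞ (Measure.count : Measure ℕ) := by
  have hcount : ∀ i : ℕ, (Measure.count : Measure ℕ) {i} ≠ 0 := by simp
  simp only [eLpNorm_exponent_top, eLpNormEssSup_eq_iSup hcount]
  set M := ⨆ i, ‖x i - y i‖ₑ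
  rcases eq_or_ne M ∞ with hM | hM
  · exact hM ▸ le_top
  have hle : ∀ i, |x i - y i| ≤ M.toReal := fun i => by
    rw [← ENNReal.ofReal_le_iff_le_toReal hM, ← Real.enorm_eq_ofReal_abs]
    exact le_iSup (fun i => ‖x i - y i‖ₑ) i
  refine iSup_le fun n => ?_
  rw [Real.enorm_eq_ofReal_abs, ENNReal.ofReal_le_iff_le_toReal hM]
  exact abs_decRearrange_sub_le hx hle n

theorem eLpNorm_count_le_of_sum_range_le {p : ℝ≥0∞} (hp0 : p ≠ 0) (hp : p ≠ ∞) {f g : ℕ → ℝ}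
    (hg : Summable fun i => |g i| ^ p.toReal)
    (h : ∀ N, ∑ n ∈ Finset.range N, |f n| ^ p.toReal ≤ ∑' i, |g i| ^ p.toReal) :
    eLpNorm f p (Measure.count : Measure ℕ) ≤ eLpNorm g p (Measure.count : Measure ℕ) := by
  have hq : 0 ≤ p.toReal := ENNReal.toReal_nonneg
  have henorm : ∀ r : ℝ, ‖r‖ₑ ^ p.toReal = ENNReal.ofReal (|r| ^ p.toReal) := fun r => by
    rw [Real.enorm_eq_ofReal_abs, ENNReal.ofReal_rpow_of_nonneg (abs_nonneg r) hq]
  simp only [eLpNorm_eq_lintegral_rpow_enorm_toReal hp0 hp, lintegral_count, henorm]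
  refine ENNReal.rpow_le_rpow ?_ (by positivity)
  rw [← ENNReal.ofReal_tsum_of_nonneg (fun i => by positivity) hg]
  refine ENNReal.tsum_le_of_sum_range_le fun N => ?_
  rw [← ENNReal.ofReal_sum_of_nonneg fun n _ => by positivity]
  exact ENNReal.ofReal_le_ofReal (h N)

theorem Memℓp.tendsto_atTop_zero {p : ℝ≥0∞} {x : ℕ → ℝ} (hx : Memℓp x p) (hp : 0 < p.toReal) :
    Tendsto x atTop (𝓝 0) := by
  have h := ((hx.summable hp).tendsto_atTop_zero).rpow_const (p := p.toReal⁻¹)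
    (Or.inr (inv_nonneg.2 hp.le))
  rw [Real.zero_rpow (inv_ne_zero hp.ne')] at h
  refine tendsto_zero_iff_norm_tendsto_zero.2 (h.congr fun i => ?_)
  exact Real.rpow_rpow_inv (norm_nonneg _) hp.ne'

theorem convexOn_abs_rpow {q : ℝ} (hq : 1 ≤ q) : ConvexOn ℝ univ fun t : ℝ => |t| ^ q := by
  refine ⟨convex_univ, fun u _ v _ a b ha hb hab => ?_⟩
  calc |a • u + b • v| ^ q ≤ (a • |u| + b • |v|) ^ q := by
        gcongr
        simpa [abs_mul, abs_of_nonneg ha, abs_of_nonneg hb] using abs_add_le (a * u) (b * v)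
    _ ≤ a • |u| ^ q + b • |v| ^ q :=
        (convexOn_rpow hq).2 (abs_nonneg u) (abs_nonneg v) ha hb hab

/-- **Nonexpansivity of decreasing rearrangement in `ℓ^p`**: for nonnegative sequences
`x, y ∈ ℓ^p` (`1 ≤ p ≤ ∞`), `‖x^↓ − y^↓‖_{ℓ^p} ≤ ‖x − y‖_{ℓ^p}` (norms taken as `L^p`
norms for the counting measure on `ℕ`). -/
theorem decRearrange_nonexpansive (p : ℝ≥0∞) (hp : 1 ≤ p) (x y : ℕ → ℝ)
    (hx0 : ∀ i, 0 ≤ x i) (hy0 : ∀ i, 0 ≤ y i)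
    (hx : Memℓp x p) (hy : Memℓp y p) :
    eLpNorm (fun i => decRearrange x i - decRearrange y i) p (Measure.count : Measure ℕ) ≤
      eLpNorm (fun i => x i - y i) p (Measure.count : Measure ℕ) := by
  rcases eq_or_ne p ∞ with rfl | hp_top
  · obtain ⟨B, hB⟩ := memℓp_infty_iff.1 hx
    exact eLpNorm_top_decRearrange_sub_le
      ⟨B, forall_mem_range.2 fun i => (Real.le_norm_self _).trans (hB (mem_range_self i))⟩
  have hq : 1 ≤ p.toReal := by
    simpa using ENNReal.toReal_mono hp_top hp
  have hq0 : 0 < p.toReal := one_pos.trans_le hq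
  have hsum : Summable fun i => |x i - y i| ^ p.toReal := by
    simpa using (hx.sub hy).summable hq0
  refine eLpNorm_count_le_of_sum_range_le (zero_lt_one.trans_le hp).ne' hp_top hsum fun N => ?_
  exact sum_range_decRearrange_le_tsum (convexOn_abs_rpow hq)
    (continuous_abs.rpow_const fun _ => Or.inr hq0.le) (fun t => by positivity) hx0 hy0
    (hx.tendsto_atTop_zero hq0) (hy.tendsto_atTop_zero hq0) hsum N
end
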